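/- Let k be a number field of degree n = [k:ℚ] and let f be a nonzero element of its ring of integers 𝒪_k. Then ∑_{v real} |f|_v² + 2·∑_{v complex} |f|_v² = n if and only if f is a root of unity, i.e. f^m = 1 for some integer m ≥ 1. -/

import Mathlib

/-!
Write `a_v = |f|_v²` and let `m_v ∈ {1, 2}` be the multiplicity of `v`, so `∑ m_v = n`. The
product formula `∏ a_v ^ m_v = N(f)² ≥ 1` gives `∑ m_v log a_v ≥ 0`, and `log a ≤ a - 1` then
yields `∑ m_v a_v ≥ n`, with equality exactly when every `a_v = 1`. By Kronecker's theorem an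
algebraic integer all of whose conjugates have absolute value `1` is a root of unity.
-/

open NumberField Finset
open scoped Classical

theorem Real.sum_mul_eq_sum_iff_forall_eq_one_of_sum_mul_log_nonneg {ι : Type*} {s : Finset ι}
    {w a : ι → ℝ} (hw : ∀ i ∈ s, 0 < w i) (ha : ∀ i ∈ s, 0 < a i)
    (hlog : 0 ≤ ∑ i ∈ s, w i * Real.log (a i)) :
    ∑ i ∈ s, w i * a i = ∑ i ∈ s, w i ↔ ∀ i ∈ s, a i = 1 := by
  refine ⟨fun hsum => ?_, fun h => sum_congr rfl fun i hi => by rw [h i hi, mul_one]⟩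
  set g : ι → ℝ := fun i => w i * (a i - 1 - Real.log (a i))
  have hg_nonneg : ∀ i ∈ s, 0 ≤ g i := fun i hi =>
    mul_nonneg (hw i hi).le (by linarith [Real.log_le_sub_one_of_pos (ha i hi)])
  have hg_sum : ∑ i ∈ s, g i = (∑ i ∈ s, w i * a i - ∑ i ∈ s, w i)
      - ∑ i ∈ s, w i * Real.log (a i) := by
    simp only [g, ← sum_sub_distrib]
    exact sum_congr rfl fun i _ => by ring
  have hg_zero := (sum_eq_zero_iff_of_nonneg hg_nonneg).mp
    (le_antisymm (by linarith) (sum_nonneg hg_nonneg))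
  intro i hi
  by_contra hne
  have hlt := Real.log_lt_sub_one_of_pos (ha i hi) hne
  have hgi := (mul_eq_zero.mp (hg_zero i hi)).resolve_left (hw i hi).ne'
  linarith

namespace NumberField.InfinitePlace

variable {K : Type*} [Field K]

theorem ite_isReal_eq_mult_mul (v : InfinitePlace K) (x : ℝ) :
    (if v.IsReal then x else 2 * x) = v.mult * x := by
  rw [mult]
  split_ifs <;> simp

variable [NumberField K]

theorem sum_mult_eq_finrank_real : ∑ v : InfinitePlace K, (v.mult : ℝ) = Module.finrank ℚ K := by
  exact_mod_cast sum_mult_eq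

theorem one_le_prod_pow_mult {x : 𝓞 K} (hx : x ≠ 0) :
    1 ≤ ∏ v : InfinitePlace K, v (x : K) ^ v.mult := by
  rw [prod_eq_abs_norm, ← Algebra.coe_norm_int, ← Int.cast_one, ← Int.cast_abs,
    Rat.cast_intCast, Int.cast_le]
  exact Int.one_le_abs (Algebra.norm_ne_zero_iff.mpr hx)

theorem sum_mult_mul_log_sq_nonneg {x : 𝓞 K} (hx : x ≠ 0) :
    0 ≤ ∑ v : InfinitePlace K, (v.mult : ℝ) * Real.log (v (x : K) ^ 2) := by
  have hpos : ∀ v : InfinitePlace K, 0 < v (x : K) := fun v => pos_iff.mpr (by simpa using hx)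
  have hlog := Real.log_nonneg (one_le_prod_pow_mult hx)
  rw [Real.log_prod fun v _ => (pow_pos (hpos v) _).ne'] at hlog
  calc (0 : ℝ) ≤ 2 * ∑ v : InfinitePlace K, Real.log (v (x : K) ^ v.mult) := by positivity
    _ = _ := by
      rw [mul_sum]
      refine sum_congr rfl fun v _ => ?_
      rw [Real.log_pow, Real.log_pow]
      ring

theorem forall_apply_eq_one_iff_exists_pow_eq_one (x : 𝓞 K) :
    (∀ v : InfinitePlace K, v (x : K) = 1) ↔ ∃ m : ℕ, 1 ≤ m ∧ x ^ m = 1 := by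
  constructor
  · intro h
    obtain ⟨m, hm, hpow⟩ := Embeddings.pow_eq_one_of_norm_eq_one K ℂ x.isIntegral_coe
      fun φ => by rw [← apply, h]
    exact ⟨m, hm, RingOfIntegers.coe_injective (by push_cast; exact hpow)⟩
  · rintro ⟨m, hm, hxm⟩ v
    have hxm' : (x : K) ^ m = 1 := by exact_mod_cast congrArg ((↑) : 𝓞 K → K) hxm
    have hpow : v (x : K) ^ m = 1 := by rw [← map_pow, hxm', map_one]
    exact (pow_eq_one_iff_of_nonneg (apply_nonneg v _) (by omega)).mp hpow

end NumberField.InfinitePlace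

theorem sum_place_sq_eq_degree_iff_rootOfUnity (k : Type*) [Field k] [NumberField k]
    (f : 𝓞 k) (hf : f ≠ 0) :
    (∑ v : InfinitePlace k,
        if v.IsReal then (v (f : k)) ^ 2 else 2 * (v (f : k)) ^ 2)
      = (Module.finrank ℚ k : ℝ) ↔
    ∃ m : ℕ, 1 ≤ m ∧ f ^ m = 1 := by
  have hpos : ∀ v : InfinitePlace k, 0 < v (f : k) :=
    fun v => InfinitePlace.pos_iff.mpr (by simpa using hf)
  simp_rw [InfinitePlace.ite_isReal_eq_mult_mul, ← InfinitePlace.sum_mult_eq_finrank_real,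
    ← InfinitePlace.forall_apply_eq_one_iff_exists_pow_eq_one]
  rw [Real.sum_mul_eq_sum_iff_forall_eq_one_of_sum_mul_log_nonneg
    (fun v _ => mod_cast v.mult_pos) (fun v _ => pow_pos (hpos v) 2)
    (InfinitePlace.sum_mult_mul_log_sq_nonneg hf)]
  simp only [mem_univ, true_implies]
  exact forall_congr' fun v => pow_eq_one_iff_of_nonneg (hpos v).le two_ne_zero
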